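/- Let R be a von Neumann regular ring. Then a right R-module M is a content module if and only if M is singly projective. -/

import Mathlib

universe u v

/-- For a subset `A` of `R` and a right `R`-module `M` (a module over `Rᵐᵒᵖ`), the additive
subgroup `M·A` of `M` generated by the products `m · a` with `a ∈ A`, `m ∈ M`. -/
def Set.rightSmulAddSubgroup {R : Type u} [Ring R] (A : Set R) (M : Type v) [AddCommGroup M]
    [Module Rᵐᵒᵖ M] : AddSubgroup M :=
  AddSubgroup.closure {y : M | ∃ a ∈ A, ∃ m : M, y = MulOpposite.op a • m}

/-- The content ideal `c(x)` of an element `x` of a right `R`-module `M`: the intersection of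
all left ideals `A` of `R` such that `x ∈ M·A`. -/
def contentSet (R : Type u) [Ring R] {M : Type v} [AddCommGroup M] [Module Rᵐᵒᵖ M] (x : M) :
    Set R :=
  ⋂ A ∈ {A : Ideal R | x ∈ Set.rightSmulAddSubgroup (A : Set R) M}, (A : Set R)

/-- A right `R`-module `M` is a content module if `x ∈ M·c(x)` for every `x ∈ M`. -/
def IsContentModule (R : Type u) [Ring R] (M : Type v) [AddCommGroup M] [Module Rᵐᵒᵖ M] :
    Prop :=
  ∀ x : M, x ∈ Set.rightSmulAddSubgroup (contentSet R x) M

/-- A right `R`-module `M` is singly projective if for every cyclic submodule `N` of `M` the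
inclusion `N → M` factors through a free right module. -/
def SinglyProjective (R : Type u) [Ring R] (M : Type v) [AddCommGroup M] [Module Rᵐᵒᵖ M] :
    Prop :=
  ∀ x : M, ∃ (ι : Type v) (φ : (Submodule.span Rᵐᵒᵖ ({x} : Set M)) →ₗ[Rᵐᵒᵖ] (ι →₀ R))
    (π : (ι →₀ R) →ₗ[Rᵐᵒᵖ] M), ∀ n : (Submodule.span Rᵐᵒᵖ ({x} : Set M)), π (φ n) = (n : M)

/-!
Over a von Neumann regular ring every finitely generated left ideal `J` has a right unit `g ∈ J`,
so `x ∈ M·A` forces `x·g = x` for some `g` in the left ideal generated by `A`.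

If `x ∈ M·c(x)`, this yields `g ∈ c(x)` with `x·g = x`, and regularity shows that `x·r = 0`
implies `g·r = 0`. Hence `x·r ↦ g·r` is a well-defined map `xR → R`, and composed with
`s ↦ x·s` it is the inclusion `xR → M`.

Conversely, if the inclusion factors as `π ∘ φ` with `f = φ x` in a free module, then
`x = π f ∈ M·{f_i}`, and every `f_i` lies in `c(x)`: whenever `x ∈ M·B` there is `g ∈ B` with
`x·g = x`, so `f = f·g` and `f_i = f_i·g ∈ B`.
-/
open MulOpposite

section RightSmul

variable {R : Type u} [Ring R] {M : Type v} [AddCommGroup M] [Module Rᵐᵒᵖ M]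

theorem Set.op_smul_mem_rightSmulAddSubgroup {A : Set R} {a : R} (ha : a ∈ A) (m : M) :
    op a • m ∈ A.rightSmulAddSubgroup M :=
  AddSubgroup.subset_closure ⟨a, ha, m, rfl⟩

theorem Set.rightSmulAddSubgroup_mono {A B : Set R} (h : A ⊆ B) :
    A.rightSmulAddSubgroup M ≤ B.rightSmulAddSubgroup M :=
  (AddSubgroup.closure_le _).mpr fun _ ⟨_, ha, m, hy⟩ =>
    hy ▸ op_smul_mem_rightSmulAddSubgroup (h ha) m

theorem Set.op_smul_eq_self_of_mem_rightSmulAddSubgroup {A : Set R} {g : R}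
    (hg : ∀ a ∈ A, a * g = a) {x : M} (hx : x ∈ A.rightSmulAddSubgroup M) : op g • x = x := by
  induction hx using AddSubgroup.closure_induction with
  | mem _ h =>
    obtain ⟨a, ha, m, rfl⟩ := h
    rw [smul_smul, ← op_mul, hg a ha]
  | zero => exact smul_zero _
  | add _ _ _ _ hx hy => rw [smul_add, hx, hy]
  | neg _ _ hx => rw [smul_neg, hx]

theorem Set.exists_fg_of_mem_rightSmulAddSubgroup {A : Set R} {x : M}
    (hx : x ∈ A.rightSmulAddSubgroup M) :
    ∃ J : Ideal R, J.FG ∧ J ≤ Ideal.span A ∧ x ∈ (J : Set R).rightSmulAddSubgroup M := by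
  induction hx using AddSubgroup.closure_induction with
  | mem _ h =>
    obtain ⟨a, ha, m, rfl⟩ := h
    exact ⟨Ideal.span {a}, Submodule.fg_span_singleton a,
      Ideal.span_le.mpr (Set.singleton_subset_iff.mpr (Ideal.subset_span ha)),
      op_smul_mem_rightSmulAddSubgroup (Ideal.mem_span_singleton_self a) m⟩
  | zero => exact ⟨⊥, Submodule.fg_bot, bot_le, zero_mem _⟩
  | add _ _ _ _ hx hy =>
    obtain ⟨J₁, hJ₁, hJ₁A, hx⟩ := hx
    obtain ⟨J₂, hJ₂, hJ₂A, hy⟩ := hy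
    exact ⟨J₁ ⊔ J₂, Submodule.FG.sup hJ₁ hJ₂, sup_le hJ₁A hJ₂A,
      add_mem (rightSmulAddSubgroup_mono (SetLike.coe_mono le_sup_left) hx)
        (rightSmulAddSubgroup_mono (SetLike.coe_mono le_sup_right) hy)⟩
  | neg _ _ hx =>
    obtain ⟨J, hJ, hJA, hx⟩ := hx
    exact ⟨J, hJ, hJA, neg_mem hx⟩

theorem mem_contentSet_iff {x : M} {a : R} :
    a ∈ contentSet R x ↔ ∀ B : Ideal R, x ∈ (B : Set R).rightSmulAddSubgroup M → a ∈ B := by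
  simp [contentSet]

theorem LinearMap.mem_rightSmulAddSubgroup_range {ι : Type*} (π : (ι →₀ R) →ₗ[Rᵐᵒᵖ] M)
    (f : ι →₀ R) : π f ∈ (Set.range f).rightSmulAddSubgroup M := by
  have hπf : π f = f.sum fun i r => op r • π (Finsupp.single i 1) := by
    conv_lhs => rw [← f.sum_single]
    simp only [map_finsuppSum, ← map_smul, Finsupp.smul_single, op_smul_eq_mul, one_mul]
  rw [hπf]
  exact AddSubgroup.sum_mem _ fun i _ =>
    Set.op_smul_mem_rightSmulAddSubgroup (Set.mem_range_self i) _

end RightSmul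

theorem Submodule.exists_linearMap_span_singleton_smul_eq {S N : Type*} [Ring S]
    [AddCommGroup N] [Module S N] {x : N} {e : S} (he : e • x = x)
    (hann : ∀ r : S, r • x = 0 → r * e = 0) :
    ∃ φ : span S {x} →ₗ[S] S, ∀ n, φ n • x = n := by
  have hker : Ideal.torsionOf S N x ≤ LinearMap.ker (LinearMap.toSpanSingleton S S e) :=
    fun r hr => hann r ((Ideal.mem_torsionOf_iff x r).mp hr)
  refine ⟨liftQ _ _ hker ∘ₗ (Ideal.quotTorsionOfEquivSpanSingleton S N x).symm.toLinearMap,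
    fun n => ?_⟩
  obtain ⟨q, rfl⟩ := (Ideal.quotTorsionOfEquivSpanSingleton S N x).surjective n
  obtain ⟨r, rfl⟩ := Submodule.Quotient.mk_surjective _ q
  rw [LinearMap.comp_apply, LinearEquiv.coe_toLinearMap, LinearEquiv.symm_apply_apply, liftQ_apply,
    Ideal.quotTorsionOfEquivSpanSingleton_apply_mk, LinearMap.toSpanSingleton_apply, smul_eq_mul, mul_smul, he]
  rfl

section VonNeumannRegular

variable {R : Type u} [Ring R] (hvnr : ∀ a : R, ∃ b : R, a * b * a = a)
  {M : Type v} [AddCommGroup M] [Module Rᵐᵒᵖ M]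
include hvnr

theorem Ideal.exists_mul_eq_self_of_fg {J : Ideal R} (hJ : J.FG) :
    ∃ g ∈ J, ∀ r ∈ J, r * g = r := by
  induction J, hJ using Submodule.fg_induction with
  | singleton a =>
    obtain ⟨b, hb⟩ := hvnr a
    refine ⟨b * a, Ideal.mul_mem_left _ b (Ideal.mem_span_singleton_self a), fun r hr => ?_⟩
    obtain ⟨s, rfl⟩ := Ideal.mem_span_singleton'.mp hr
    rw [mul_assoc, ← mul_assoc a, hb]
  | sup J₁ J₂ _ _ h₁ h₂ =>
    obtain ⟨g₁, hg₁J, hg₁⟩ := h₁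
    obtain ⟨g₂, hg₂J, hg₂⟩ := h₂
    -- `c` measures how far `g₁` is from a right unit on `J₂`; correct `g₁` by a right unit of `c`.
    set c := g₂ - g₂ * g₁
    obtain ⟨t, ht⟩ := hvnr c
    set k := t * c
    have hck : c * k = c := by rw [← mul_assoc, ht]
    have hcJ : c ∈ J₁ ⊔ J₂ :=
      sub_mem (Ideal.mem_sup_right hg₂J) (Ideal.mul_mem_left _ _ (Ideal.mem_sup_left hg₁J))
    refine ⟨g₁ + k - g₁ * k, sub_mem (add_mem (Ideal.mem_sup_left hg₁J)
      (Ideal.mul_mem_left _ t hcJ)) (Ideal.mul_mem_left _ g₁ (Ideal.mul_mem_left _ t hcJ)), ?_⟩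
    have unit₁ : ∀ r ∈ J₁, r * (g₁ + k - g₁ * k) = r := fun r hr => by
      calc r * (g₁ + k - g₁ * k) = r * g₁ + r * k - r * g₁ * k := by noncomm_ring
        _ = r := by rw [hg₁ r hr, add_sub_cancel_right]
    have unit₂ : ∀ r ∈ J₂, r * (g₁ + k - g₁ * k) = r := fun r hr => by
      have hrc : r - r * g₁ = r * c := by rw [mul_sub, ← mul_assoc, hg₂ r hr]
      calc r * (g₁ + k - g₁ * k) = r * g₁ + (r - r * g₁) * k := by noncomm_ring
        _ = r := by rw [hrc, mul_assoc, hck, ← hrc]; abel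
    intro r hr
    obtain ⟨r₁, hr₁, r₂, hr₂, rfl⟩ := Submodule.mem_sup.mp hr
    rw [add_mul, unit₁ r₁ hr₁, unit₂ r₂ hr₂]

theorem exists_mem_span_op_smul_eq_self {A : Set R} {x : M}
    (hx : x ∈ A.rightSmulAddSubgroup M) : ∃ g ∈ Ideal.span A, op g • x = x := by
  obtain ⟨J, hJ, hJA, hxJ⟩ := Set.exists_fg_of_mem_rightSmulAddSubgroup hx
  obtain ⟨g, hgJ, hg⟩ := Ideal.exists_mul_eq_self_of_fg hvnr hJ
  exact ⟨g, hJA hgJ, Set.op_smul_eq_self_of_mem_rightSmulAddSubgroup hg hxJ⟩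

theorem exists_mem_contentSet_op_smul_eq_self {x : M}
    (hx : x ∈ (contentSet R x).rightSmulAddSubgroup M) :
    ∃ g ∈ contentSet R x, op g • x = x := by
  obtain ⟨g, hg, hgx⟩ := exists_mem_span_op_smul_eq_self hvnr hx
  refine ⟨g, mem_contentSet_iff.mpr fun B hB => Ideal.span_le.mpr ?_ hg, hgx⟩
  exact fun a ha => mem_contentSet_iff.mp ha B hB

theorem mul_eq_zero_of_op_smul_eq_zero {x : M} {g : R} (hg : g ∈ contentSet R x)
    (hgx : op g • x = x) {r : R} (hr : op r • x = 0) : g * r = 0 := by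
  obtain ⟨t, ht⟩ := hvnr r
  -- `a` still fixes `x`, so `g ∈ c(x) ⊆ R a`, while `a` kills `r`.
  set a := g - g * (r * t)
  have hax : op a • x = x := by
    rw [op_sub, sub_smul, hgx, op_mul, mul_smul, hgx, op_mul, mul_smul, hr, smul_zero, sub_zero]
  have hxa : x ∈ ((Ideal.span {a} : Ideal R) : Set R).rightSmulAddSubgroup M :=
    hax ▸ Set.op_smul_mem_rightSmulAddSubgroup (Ideal.mem_span_singleton_self a) x
  obtain ⟨s, hs⟩ := Ideal.mem_span_singleton'.mp (mem_contentSet_iff.mp hg _ hxa)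
  have har : a * r = 0 := by
    calc a * r = g * r - g * (r * t * r) := by simp only [a]; noncomm_ring
      _ = 0 := by rw [ht, sub_self]
  rw [← hs, mul_assoc, har, mul_zero]

theorem apply_mem_contentSet {x : M} {ι : Type*}
    (φ : Submodule.span Rᵐᵒᵖ {x} →ₗ[Rᵐᵒᵖ] (ι →₀ R)) (i : ι) :
    φ ⟨x, Submodule.mem_span_singleton_self x⟩ i ∈ contentSet R x := by
  refine mem_contentSet_iff.mpr fun B hB => ?_
  obtain ⟨g, hgB, hgx⟩ := exists_mem_span_op_smul_eq_self hvnr hB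
  have hfg : op g • φ ⟨x, Submodule.mem_span_singleton_self x⟩ =
      φ ⟨x, Submodule.mem_span_singleton_self x⟩ := by
    rw [← map_smul]
    exact congrArg φ (Subtype.ext hgx)
  rw [← hfg, Finsupp.smul_apply, op_smul_eq_mul]
  exact B.mul_mem_left _ (Ideal.span_eq B ▸ hgB)

theorem IsContentModule.singlyProjective (h : IsContentModule R M) : SinglyProjective R M := by
  intro x
  obtain ⟨g, hg, hgx⟩ := exists_mem_contentSet_op_smul_eq_self hvnr (h x)
  obtain ⟨φ, hφ⟩ := Submodule.exists_linearMap_span_singleton_smul_eq hgx fun r hr =>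
    congrArg op (mul_eq_zero_of_op_smul_eq_zero hvnr hg hgx (r := r.unop) hr)
  let e : Rᵐᵒᵖ ≃ₗ[Rᵐᵒᵖ] (PUnit.{v + 1} →₀ R) :=
    (opLinearEquiv Rᵐᵒᵖ).symm ≪≫ₗ (Finsupp.uniqueLinearEquiv Rᵐᵒᵖ R PUnit.unit).symm
  refine ⟨PUnit, e.toLinearMap ∘ₗ φ, LinearMap.toSpanSingleton Rᵐᵒᵖ M x ∘ₗ e.symm.toLinearMap,
    fun n => ?_⟩
  simp [hφ]

theorem SinglyProjective.isContentModule (h : SinglyProjective R M) : IsContentModule R M := by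
  intro x
  obtain ⟨ι, φ, π, hπφ⟩ := h x
  have hx := π.mem_rightSmulAddSubgroup_range (φ ⟨x, Submodule.mem_span_singleton_self x⟩)
  rw [hπφ] at hx
  exact Set.rightSmulAddSubgroup_mono (Set.range_subset_iff.mpr (apply_mem_contentSet hvnr φ)) hx

end VonNeumannRegular

/-- over a von Neumann regular ring `R`, a right `R`-module is a content module
if and only if it is singly projective. -/
theorem content_iff_singlyProjective_of_vonNeumannRegular (R : Type u) [Ring R]
    (hvnr : ∀ a : R, ∃ b : R, a * b * a = a) (M : Type v) [AddCommGroup M] [Module Rᵐᵒᵖ M] :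
    IsContentModule R M ↔ SinglyProjective R M :=
  ⟨IsContentModule.singlyProjective hvnr, SinglyProjective.isContentModule hvnr⟩
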